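/- arXiv:2409.03898 — 2 statements merged into one kernel-verified Lean document; each statement's English description precedes it below -/
import Mathlib

section
/- Let G be a finite DAG with n nodes and let L ∈ ℤ⁺ be such that every SPP pebbling strategy of G with memory bound k·r uses at least L I/O moves. Then every MPP pebbling strategy of G with k processors, memory bound r per processor and I/O cost g has total cost at least g·L/k + n/k. -/
open scoped Classical

/-- A relation is a DAG edge relation if its transitive closure is irreflexive
(i.e., the directed graph is acyclic). -/
def IsDag {V : Type*} (E : V → V → Prop) : Prop := Irreflexive (Relation.TransGen E)

namespace MPP

variable {V : Type*} [DecidableEq V] {k : ℕ}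

/-- A configuration of multiprocessor red-blue pebbling: a set of red pebbles
for each of the `k` processors, and a set of blue pebbles. -/
structure Conf (V : Type*) (k : ℕ) where
  red : Fin k → Finset V
  blue : Finset V

/-- Moves of multiprocessor red-blue pebbling. `save`/`load` are the parallel I/O
moves (R1-M)/(R2-M), `compute` is (R3-M), and the removals are (R4-M). -/
inductive Move (V : Type*) (k : ℕ) where
  | save (m : ℕ) (f : Fin m → Fin k) (v : Fin m → V)
  | load (m : ℕ) (f : Fin m → Fin k) (v : Fin m → V)
  | compute (m : ℕ) (f : Fin m → Fin k) (v : Fin m → V)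
  | removeRed (j : Fin k) (x : V)
  | removeBlue (x : V)

/-- Add, for each `i`, the node `v i` to the red pebbles of processor `f i`. -/
def addRed (C : Conf V k) {m : ℕ} (f : Fin m → Fin k) (v : Fin m → V) :
    Fin k → Finset V :=
  fun j => C.red j ∪ (Finset.univ.filter (fun i => f i = j)).image v

/-- The effect of a move on a configuration. -/
def apply : Move V k → Conf V k → Conf V k
  | .save _ _ v, C => ⟨C.red, C.blue ∪ Finset.univ.image v⟩
  | .load _ f v, C => ⟨addRed C f v, C.blue⟩
  | .compute _ f v, C => ⟨addRed C f v, C.blue⟩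
  | .removeRed j x, C => ⟨Function.update C.red j (C.red j \ {x}), C.blue⟩
  | .removeBlue x, C => ⟨C.red, C.blue \ {x}⟩

/-- When a move may legally be performed in a given configuration. -/
def Legal (E : V → V → Prop) : Conf V k → Move V k → Prop
  | C, .save m f v => m ≤ k ∧ Function.Injective f ∧ ∀ i, v i ∈ C.red (f i)
  | C, .load m f v => m ≤ k ∧ Function.Injective f ∧ ∀ i, v i ∈ C.blue
  | C, .compute m f v =>
      m ≤ k ∧ Function.Injective f ∧ ∀ i, ∀ u, E u (v i) → u ∈ C.red (f i)
  | _, .removeRed _ _ => True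
  | _, .removeBlue _ => True

/-- A configuration respects the fast-memory bound `r` for every processor. -/
def Valid (r : ℕ) (C : Conf V k) : Prop := ∀ j, (C.red j).card ≤ r

/-- `Run E r C ms C'` : starting from configuration `C`, the list of moves `ms`
may be legally executed (respecting the memory bound `r` throughout) and leads
to configuration `C'`. -/
inductive Run (E : V → V → Prop) (r : ℕ) : Conf V k → List (Move V k) → Conf V k → Prop
  | nil (C : Conf V k) : Run E r C [] C
  | cons {C C'' : Conf V k} {mv : Move V k} {ms : List (Move V k)} :
      Legal E C mv → Valid r (apply mv C) → Run E r (apply mv C) ms C'' →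
      Run E r C (mv :: ms) C''

/-- Cost of a single move: `g` for I/O, `1` for compute, `0` for removal. -/
def moveCost (g : ℕ) : Move V k → ℕ
  | .save .. => g
  | .load .. => g
  | .compute .. => 1
  | .removeRed .. => 0
  | .removeBlue .. => 0

/-- Total cost of a sequence of moves. -/
def cost (g : ℕ) (ms : List (Move V k)) : ℕ := (ms.map (moveCost g)).sum

def isIO : Move V k → Bool
  | .save .. => true
  | .load .. => true
  | _ => false

/-- The number of I/O moves in a sequence of moves. -/
def ioCount (ms : List (Move V k)) : ℕ := (ms.filter isIO).length

def isCompute : Move V k → Bool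
  | .compute .. => true
  | _ => false

/-- The number of compute moves in a sequence of moves. -/
def computeCount (ms : List (Move V k)) : ℕ := (ms.filter isCompute).length

/-- A sink of the DAG: a node with no outgoing edge. -/
def IsSink (E : V → V → Prop) (v : V) : Prop := ∀ u, ¬ E v u

/-- A terminal configuration: every sink carries at least one pebble. -/
def Terminal (E : V → V → Prop) (C : Conf V k) : Prop :=
  ∀ v, IsSink E v → v ∈ C.blue ∨ ∃ j, v ∈ C.red j

/-- The initial (all-empty) configuration. -/
def init (V : Type*) (k : ℕ) : Conf V k := ⟨fun _ => ∅, ∅⟩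

/-- `ms` is a pebbling strategy: a legal run from the empty configuration ending
in a terminal configuration. -/
def IsPebbling (E : V → V → Prop) (r : ℕ) (ms : List (Move V k)) : Prop :=
  ∃ Cf, Run E r (init V k) ms Cf ∧ Terminal E Cf

/-- The optimal (minimum) cost of a pebbling strategy with `k` processors,
memory bound `r` per processor, and I/O cost `g`. -/
noncomputable def optCost (E : V → V → Prop) (k r g : ℕ) : ℕ :=
  sInf {c | ∃ ms : List (Move V k), IsPebbling E r ms ∧ cost g ms = c}

/-- The minimum number of I/O moves among all minimum-cost pebbling strategies. -/
noncomputable def optIO (E : V → V → Prop) (k r g : ℕ) : ℕ :=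
  sInf {q | ∃ ms : List (Move V k),
    IsPebbling E r ms ∧ cost g ms = optCost E k r g ∧ ioCount ms = q}

/-- The maximum in-degree `Δ_in` of the DAG. -/
noncomputable def maxInDeg (E : V → V → Prop) [Fintype V] : ℕ :=
  Finset.univ.sup fun v => (Finset.univ.filter fun u => E u v).card

/-- The set of nodes computed by a move. -/
def computes : Move V k → Set V
  | .compute _ _ v => Set.range v
  | _ => ∅

/-- `x` is computed by the move at position `s` of `ms`. -/
def ComputedAt (ms : List (Move V k)) (s : ℕ) (x : V) : Prop :=
  ∃ mv, ms[s]? = some mv ∧ x ∈ computes mv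

/-- The set of nodes computed by some move strictly before position `t`. -/
def computedBefore (ms : List (Move V k)) (t : ℕ) : Set V :=
  {x | ∃ s < t, ComputedAt ms s x}

/-- `x` is ready at position `t`: it has not yet been computed, but all its
in-neighbors have been. -/
def Ready (E : V → V → Prop) (ms : List (Move V k)) (t : ℕ) (x : V) : Prop :=
  x ∉ computedBefore ms t ∧ ∀ u, E u x → u ∈ computedBefore ms t

/-- The number of nodes that are ready at position `t`. -/
noncomputable def readyCount (E : V → V → Prop) [Fintype V]
    (ms : List (Move V k)) (t : ℕ) : ℕ :=
  (Finset.univ.filter (Ready E ms t)).card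

end MPP

namespace SPP

variable {V : Type*} [DecidableEq V]

/-- A configuration of single-processor red-blue pebbling. -/
structure Conf (V : Type*) where
  red : Finset V
  blue : Finset V

/-- Moves of single-processor red-blue pebbling: `load` is (R1-S), `save` is
(R2-S), `compute` is (R3-S), and the removals are (R4-S). -/
inductive Move (V : Type*) where
  | load (v : V)
  | save (v : V)
  | compute (v : V)
  | removeRed (v : V)
  | removeBlue (v : V)

/-- The effect of a move on a configuration. -/
def apply : Move V → Conf V → Conf V
  | .load v, C => ⟨insert v C.red, C.blue⟩
  | .save v, C => ⟨C.red, insert v C.blue⟩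
  | .compute v, C => ⟨insert v C.red, C.blue⟩
  | .removeRed v, C => ⟨C.red.erase v, C.blue⟩
  | .removeBlue v, C => ⟨C.red, C.blue.erase v⟩

/-- When a move may legally be performed. -/
def Legal (E : V → V → Prop) : Conf V → Move V → Prop
  | C, .load v => v ∈ C.blue
  | C, .save v => v ∈ C.red
  | C, .compute v => ∀ u, E u v → u ∈ C.red
  | _, .removeRed _ => True
  | _, .removeBlue _ => True

/-- A configuration respects the fast-memory bound `r`. -/
def Valid (r : ℕ) (C : Conf V) : Prop := C.red.card ≤ r

/-- `Run E r C ms C'` : starting from configuration `C`, the list of moves `ms`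
may be legally executed (respecting the memory bound `r` throughout) and leads
to configuration `C'`. -/
inductive Run (E : V → V → Prop) (r : ℕ) : Conf V → List (Move V) → Conf V → Prop
  | nil (C : Conf V) : Run E r C [] C
  | cons {C C'' : Conf V} {mv : Move V} {ms : List (Move V)} :
      Legal E C mv → Valid r (apply mv C) → Run E r (apply mv C) ms C'' →
      Run E r C (mv :: ms) C''

def isIO : Move V → Bool
  | .load _ => true
  | .save _ => true
  | _ => false

/-- The number of I/O moves (of type (R1-S) or (R2-S)) in a sequence of moves. -/
def ioCount (ms : List (Move V)) : ℕ := (ms.filter isIO).length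

def isComputeOrRemove : Move V → Bool
  | .compute _ => true
  | .removeRed _ => true
  | .removeBlue _ => true
  | _ => false

/-- A sink of the DAG: a node with no outgoing edge. -/
def IsSink (E : V → V → Prop) (v : V) : Prop := ∀ u, ¬ E v u

/-- A terminal configuration: every sink carries a pebble. -/
def Terminal (E : V → V → Prop) (C : Conf V) : Prop :=
  ∀ v, IsSink E v → v ∈ C.blue ∨ v ∈ C.red

/-- The initial (empty) configuration. -/
def init (V : Type*) : Conf V := ⟨∅, ∅⟩

/-- `ms` is an SPP pebbling strategy with memory bound `r`. -/
def IsPebbling (E : V → V → Prop) (r : ℕ) (ms : List (Move V)) : Prop :=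
  ∃ Cf, Run E r (init V) ms Cf ∧ Terminal E Cf

end SPP

/-!
A `k`-processor strategy with memory `r` per processor is simulated move by move by a single
processor with memory `k * r` whose red pebbles are the union of all processors' red pebbles;
a parallel I/O move on at most `k` nodes becomes at most `k` sequential I/O moves, so
`L ≤ k · #I/O`. On the other hand every pebbled node has been computed, the computed nodes are
closed under predecessors, and at the end all sinks are pebbled, so acyclicity forces every node
to be computed; a parallel compute move handles at most `k` nodes, so `n ≤ k · #compute`.
Since the cost is `g · #I/O + #compute`, the bound follows.
-/

theorem IsDag.wellFounded_flip {V : Type*} [Finite V] {E : V → V → Prop} (hE : IsDag E) :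
    WellFounded (flip E) := by
  have : IsTrans V (Relation.TransGen (flip E)) := ⟨fun _ _ _ => Relation.TransGen.trans⟩
  have : Std.Irrefl (Relation.TransGen (flip E)) :=
    ⟨fun a h => hE a (Relation.transGen_swap.1 h)⟩
  exact Subrelation.wf Relation.TransGen.single (Finite.wellFounded_of_trans_of_irrefl _)

def PredClosed {V : Type*} (E : V → V → Prop) (S : Set V) : Prop :=
  ∀ ⦃u x⦄, E u x → x ∈ S → u ∈ S

theorem IsDag.eq_univ_of_predClosed {V : Type*} [Finite V] {E : V → V → Prop} (hE : IsDag E)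
    {S : Set V} (hS : PredClosed E S) (hsinks : ∀ v, (∀ w, ¬ E v w) → v ∈ S) :
    S = Set.univ := by
  refine Set.eq_univ_of_forall fun x => ?_
  induction x using hE.wellFounded_flip.induction with
  | _ x ih =>
    by_cases hx : ∃ w, E x w
    · obtain ⟨w, hw⟩ := hx
      exact hS hw (ih w hw)
    · exact hsinks x (not_exists.1 hx)

namespace SPP

variable {V : Type*} {E : V → V → Prop} {r : ℕ}

theorem ioCount_append (l₁ l₂ : List (Move V)) :
    ioCount (l₁ ++ l₂) = ioCount l₁ + ioCount l₂ := by
  simp [ioCount, List.filter_append]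

theorem ioCount_le_length (ss : List (Move V)) : ioCount ss ≤ ss.length :=
  List.length_filter_le _ _

variable [DecidableEq V]

theorem Run.append {C C' C'' : Conf V} {l₁ l₂ : List (Move V)}
    (h₁ : Run E r C l₁ C') (h₂ : Run E r C' l₂ C'') : Run E r C (l₁ ++ l₂) C'' := by
  induction h₁ with
  | nil => exact h₂
  | cons hleg hval _ ih => exact Run.cons hleg hval (ih h₂)

theorem run_map_of_apply_eq_insert (mk : V → Move V)
    (hmk : ∀ x R B, apply (mk x) ⟨R, B⟩ = ⟨insert x R, B⟩) {K : Finset V} (hK : K.card ≤ r)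
    (B : Finset V) (l : List V) {R : Finset V}
    (hlegal : ∀ x ∈ l, ∀ R', R ⊆ R' → Legal E ⟨R', B⟩ (mk x)) (hsub : R ∪ l.toFinset ⊆ K) :
    Run E r ⟨R, B⟩ (l.map mk) ⟨R ∪ l.toFinset, B⟩ := by
  induction l generalizing R with
  | nil => simpa using Run.nil _
  | cons x t ih =>
    have heq : insert x R ∪ t.toFinset = R ∪ (x :: t).toFinset := by
      simp [Finset.insert_union, Finset.union_insert]
    have hsub' : insert x R ∪ t.toFinset ⊆ K := heq ▸ hsub
    refine Run.cons (hlegal x List.mem_cons_self R subset_rfl) ?_ ?_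
    · rw [hmk]
      exact (Finset.card_le_card (Finset.union_subset_left hsub')).trans hK
    · rw [hmk, ← heq]
      exact ih (fun y hy R' hR' => hlegal y (List.mem_cons_of_mem _ hy) R'
        ((Finset.subset_insert x R).trans hR')) hsub'

theorem run_map_save {R : Finset V} (hR : R.card ≤ r) (l : List V) {B : Finset V}
    (hl : ∀ x ∈ l, x ∈ R) : Run E r ⟨R, B⟩ (l.map Move.save) ⟨R, B ∪ l.toFinset⟩ := by
  induction l generalizing B with
  | nil => simpa using Run.nil _
  | cons x t ih =>
    have heq : insert x B ∪ t.toFinset = B ∪ (x :: t).toFinset := by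
      simp [Finset.insert_union, Finset.union_insert]
    refine Run.cons (hl x List.mem_cons_self) hR ?_
    rw [← heq]
    exact ih fun y hy => hl y (List.mem_cons_of_mem _ hy)

end SPP

namespace MPP

variable {V : Type*} {k : ℕ} {E : V → V → Prop} {r : ℕ}

theorem ioCount_append (l₁ l₂ : List (Move V k)) :
    ioCount (l₁ ++ l₂) = ioCount l₁ + ioCount l₂ := by
  simp [ioCount, List.filter_append]

theorem computeCount_append (l₁ l₂ : List (Move V k)) :
    computeCount (l₁ ++ l₂) = computeCount l₁ + computeCount l₂ := by
  simp [computeCount, List.filter_append]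

theorem cost_eq (g : ℕ) (ms : List (Move V k)) :
    cost g ms = g * ioCount ms + computeCount ms := by
  induction ms with
  | nil => rfl
  | cons mv ms ih =>
    cases mv <;>
      simp [cost, ioCount, computeCount, List.filter_cons, isIO, isCompute, moveCost] at ih ⊢ <;>
      lia

variable [DecidableEq V]

def allRed (C : Conf V k) : Finset V := Finset.univ.biUnion C.red

def pebbled (C : Conf V k) : Finset V := allRed C ∪ C.blue

def Conf.toSPP (C : Conf V k) : SPP.Conf V := ⟨allRed C, C.blue⟩

theorem mem_allRed {C : Conf V k} {j : Fin k} {x : V} (h : x ∈ C.red j) : x ∈ allRed C :=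
  Finset.mem_biUnion.2 ⟨j, Finset.mem_univ _, h⟩

theorem allRed_init : allRed (init V k) = ∅ := by
  ext
  simp [allRed, init]

theorem Conf.toSPP_init : (init V k).toSPP = SPP.init V := by
  rw [Conf.toSPP, allRed_init]
  rfl

theorem card_allRed_le {C : Conf V k} (hC : Valid r C) : (allRed C).card ≤ k * r :=
  calc (allRed C).card ≤ ∑ j, (C.red j).card := Finset.card_biUnion_le
    _ ≤ ∑ _j : Fin k, r := Finset.sum_le_sum fun j _ => hC j
    _ = k * r := by simp

theorem allRed_addRed (C : Conf V k) {m : ℕ} (f : Fin m → Fin k) (v : Fin m → V)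
    (B : Finset V) : allRed (⟨addRed C f v, B⟩ : Conf V k) = allRed C ∪ Finset.univ.image v := by
  ext x
  simp only [allRed, addRed, Finset.mem_biUnion, Finset.mem_union, Finset.mem_image,
    Finset.mem_filter, Finset.mem_univ, true_and]
  constructor
  · rintro ⟨j, h | ⟨i, -, rfl⟩⟩
    · exact Or.inl ⟨j, h⟩
    · exact Or.inr ⟨i, rfl⟩
  · rintro (⟨j, h⟩ | ⟨i, rfl⟩)
    · exact ⟨j, Or.inl h⟩
    · exact ⟨f i, Or.inr ⟨i, rfl, rfl⟩⟩

theorem allRed_removeRed_subset (C : Conf V k) (j : Fin k) (x : V) :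
    allRed (apply (.removeRed j x) C) ⊆ allRed C := by
  intro y hy
  obtain ⟨j', -, hy⟩ := Finset.mem_biUnion.1 hy
  refine mem_allRed (j := j') ?_
  rcases eq_or_ne j' j with rfl | hj
  · simp_all [apply]
  · simpa [apply, hj] using hy

theorem erase_allRed_subset_allRed_removeRed (C : Conf V k) (j : Fin k) (x : V) :
    (allRed C).erase x ⊆ allRed (apply (.removeRed j x) C) := by
  intro y hy
  obtain ⟨hyx, hy⟩ := Finset.mem_erase.1 hy
  obtain ⟨j', -, hy⟩ := Finset.mem_biUnion.1 hy
  refine mem_allRed (j := j') ?_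
  rcases eq_or_ne j' j with rfl | hj
  · simp [apply, hy, hyx]
  · simpa [apply, hj] using hy

theorem ioCount_map_image_le {m : ℕ} (hm : m ≤ k) (v : Fin m → V) (mk : V → SPP.Move V) :
    SPP.ioCount ((Finset.univ.image v).toList.map mk) ≤ k :=
  calc SPP.ioCount ((Finset.univ.image v).toList.map mk)
      ≤ (Finset.univ.image v).card := by
        simpa using SPP.ioCount_le_length ((Finset.univ.image v).toList.map mk)
    _ ≤ m := by simpa using Finset.card_image_le (s := Finset.univ) (f := v)
    _ ≤ k := hm

theorem spp_run_addRed (mk : V → SPP.Move V)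
    (hmk : ∀ x R B, SPP.apply (mk x) ⟨R, B⟩ = ⟨insert x R, B⟩) {C : Conf V k} {m : ℕ}
    {f : Fin m → Fin k} {v : Fin m → V}
    (hlegal : ∀ i R, allRed C ⊆ R → SPP.Legal E ⟨R, C.blue⟩ (mk (v i)))
    (hval : Valid r (⟨addRed C f v, C.blue⟩ : Conf V k)) :
    SPP.Run E (k * r) C.toSPP ((Finset.univ.image v).toList.map mk)
      (⟨addRed C f v, C.blue⟩ : Conf V k).toSPP := by
  have hrun := SPP.run_map_of_apply_eq_insert mk hmk (card_allRed_le hval) C.blue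
    (Finset.univ.image v).toList (R := allRed C) (by simpa using hlegal)
    (by rw [Finset.toList_toFinset, ← allRed_addRed])
  simpa [Conf.toSPP, allRed_addRed] using hrun

/-- Another processor may still hold `x`, in which case the union of the red sets is unchanged
and no move is needed. -/
theorem exists_spp_run_removeRed {C : Conf V k} {j : Fin k} {x : V}
    (hval : Valid r (apply (.removeRed j x) C)) :
    ∃ ss, SPP.Run E (k * r) C.toSPP ss (apply (.removeRed j x) C).toSPP ∧
      SPP.ioCount ss = 0 := by
  set C' := apply (.removeRed j x) C
  have hsub : allRed C' ⊆ allRed C := allRed_removeRed_subset C j x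
  have hsup : (allRed C).erase x ⊆ allRed C' := erase_allRed_subset_allRed_removeRed C j x
  by_cases hx : x ∈ allRed C'
  · have heq : allRed C' = allRed C := hsub.antisymm ((Finset.erase_subset_iff_of_mem hx).1 hsup)
    refine ⟨[], ?_, rfl⟩
    rw [show C'.toSPP = C.toSPP by simp [Conf.toSPP, heq]; rfl]
    exact .nil _
  · have heq : allRed C' = (allRed C).erase x :=
      (Finset.subset_erase.2 ⟨hsub, hx⟩).antisymm hsup
    refine ⟨[.removeRed x], .cons trivial ?_ ?_, rfl⟩
    · show ((allRed C).erase x).card ≤ k * r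
      exact heq ▸ card_allRed_le hval
    · rw [show C'.toSPP = SPP.apply (.removeRed x) C.toSPP by
        simp [Conf.toSPP, SPP.apply, heq]; rfl]
      exact .nil _

theorem exists_spp_run_of_legal {C : Conf V k} {mv : Move V k} (hleg : Legal E C mv)
    (hval : Valid r (apply mv C)) :
    ∃ ss, SPP.Run E (k * r) C.toSPP ss (apply mv C).toSPP ∧
      SPP.ioCount ss ≤ k * ioCount [mv] := by
  cases mv with
  | save m f v =>
    obtain ⟨hm, -, hv⟩ := hleg
    refine ⟨_, ?_, by simpa [ioCount, List.filter_cons, isIO] using ioCount_map_image_le hm v .save⟩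
    simpa [Conf.toSPP, apply, allRed] using SPP.run_map_save (E := E) (B := C.blue)
      (R := allRed C) (card_allRed_le hval) (Finset.univ.image v).toList
      (by simpa using fun i => mem_allRed (hv i))
  | load m f v =>
    obtain ⟨hm, -, hv⟩ := hleg
    exact ⟨_, spp_run_addRed .load (fun _ _ _ => rfl) (fun i _ _ => hv i) hval,
      by simpa [ioCount, List.filter_cons, isIO] using ioCount_map_image_le hm v .load⟩
  | compute m f v =>
    obtain ⟨-, -, hv⟩ := hleg
    exact ⟨_, spp_run_addRed .compute (fun _ _ _ => rfl)
      (fun i _ hR u hu => hR (mem_allRed (hv i u hu))) hval,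
      by simp [SPP.ioCount, List.filter_map, Function.comp_def, SPP.isIO]⟩
  | removeRed j x =>
    obtain ⟨ss, hss, hio⟩ := exists_spp_run_removeRed (E := E) hval
    exact ⟨ss, hss, hio.trans_le (Nat.zero_le _)⟩
  | removeBlue x =>
    refine ⟨[.removeBlue x], .cons trivial (card_allRed_le hval) ?_,
      by simp [SPP.ioCount, SPP.isIO]⟩
    simpa [Conf.toSPP, SPP.apply, apply, allRed, Finset.sdiff_singleton_eq_erase]
      using SPP.Run.nil _

theorem Run.exists_spp_run {C C' : Conf V k} {ms : List (Move V k)} (h : Run E r C ms C') :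
    ∃ ss, SPP.Run E (k * r) C.toSPP ss C'.toSPP ∧ SPP.ioCount ss ≤ k * ioCount ms := by
  induction h with
  | nil C => exact ⟨[], .nil _, Nat.zero_le _⟩
  | @cons C C'' mv ms hleg hval _ ih =>
    obtain ⟨ss₁, hrun₁, hio₁⟩ := exists_spp_run_of_legal hleg hval
    obtain ⟨ss₂, hrun₂, hio₂⟩ := ih
    refine ⟨ss₁ ++ ss₂, hrun₁.append hrun₂, ?_⟩
    rw [SPP.ioCount_append, ← List.singleton_append, ioCount_append, Nat.mul_add]
    exact Nat.add_le_add hio₁ hio₂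

theorem IsPebbling.exists_spp_pebbling {ms : List (Move V k)} (hms : IsPebbling E r ms) :
    ∃ ss, SPP.IsPebbling E (k * r) ss ∧ SPP.ioCount ss ≤ k * ioCount ms := by
  obtain ⟨Cf, hrun, hterm⟩ := hms
  obtain ⟨ss, hss, hio⟩ := hrun.exists_spp_run
  rw [Conf.toSPP_init] at hss
  refine ⟨ss, ⟨Cf.toSPP, hss, fun v hv => ?_⟩, hio⟩
  rcases hterm v hv with h | ⟨j, h⟩
  · exact Or.inl h
  · exact Or.inr (mem_allRed h)

def Move.computed : Move V k → Finset V
  | .compute _ _ v => Finset.univ.image v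
  | _ => ∅

def computedNodes : List (Move V k) → Finset V
  | [] => ∅
  | mv :: ms => mv.computed ∪ computedNodes ms

theorem card_computed_le {C : Conf V k} {mv : Move V k} (hleg : Legal E C mv) :
    mv.computed.card ≤ k * computeCount [mv] := by
  cases mv with
  | compute m f v =>
    simpa [Move.computed, computeCount, List.filter_cons, isCompute] using
      (Finset.card_image_le (s := Finset.univ) (f := v)).trans ((Finset.card_fin m).trans_le hleg.1)
  | _ => simp [Move.computed]

theorem Run.card_computedNodes_le {C C' : Conf V k} {ms : List (Move V k)}
    (h : Run E r C ms C') : (computedNodes ms).card ≤ k * computeCount ms := by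
  induction h with
  | nil => simp [computedNodes]
  | @cons C C'' mv ms hleg _ _ ih =>
    rw [← List.singleton_append, computeCount_append, Nat.mul_add]
    exact (Finset.card_union_le _ _).trans (Nat.add_le_add (card_computed_le hleg) ih)

theorem pebbled_apply_subset {C : Conf V k} {mv : Move V k} (hleg : Legal E C mv) :
    pebbled (apply mv C) ⊆ pebbled C ∪ mv.computed := by
  cases mv with
  | removeRed j x =>
    exact (Finset.union_subset_union_left (allRed_removeRed_subset C j x)).trans
      Finset.subset_union_left
  | _ =>
    simp only [Legal] at hleg
    intro y hy
    simp [pebbled, apply, allRed, addRed, Move.computed] at hy ⊢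
    aesop

theorem predClosed_union_computed {C : Conf V k} {mv : Move V k} (hleg : Legal E C mv)
    {S : Finset V} (hC : pebbled C ⊆ S) (hS : PredClosed E (S : Set V)) :
    PredClosed E ((S ∪ mv.computed : Finset V) : Set V) := by
  cases mv with
  | compute m f v =>
    obtain ⟨-, -, hv⟩ := hleg
    intro u x hux hx
    simp only [Finset.coe_union, Set.mem_union, Finset.mem_coe] at hx ⊢
    rcases hx with hx | hx
    · exact Or.inl (hS hux hx)
    · obtain ⟨i, -, rfl⟩ := Finset.mem_image.1 hx
      exact Or.inl (hC (Finset.mem_union_left _ (mem_allRed (hv i u hux))))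
  | _ => simpa [Move.computed] using hS

theorem Run.pebbled_subset_computedNodes {C C' : Conf V k} {ms : List (Move V k)}
    (h : Run E r C ms C') {S : Finset V} (hC : pebbled C ⊆ S) (hS : PredClosed E (S : Set V)) :
    pebbled C' ⊆ S ∪ computedNodes ms ∧
      PredClosed E ((S ∪ computedNodes ms : Finset V) : Set V) := by
  induction h generalizing S with
  | nil => simpa [computedNodes] using ⟨hC, hS⟩
  | @cons C C'' mv ms hleg _ _ ih =>
    have := ih ((pebbled_apply_subset hleg).trans (Finset.union_subset_union_left hC))
      (predClosed_union_computed hleg hC hS)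
    simpa [computedNodes, Finset.union_assoc] using this

theorem IsPebbling.card_le_computeCount [Fintype V] (hE : IsDag E) {ms : List (Move V k)}
    (hms : IsPebbling E r ms) : Fintype.card V ≤ k * computeCount ms := by
  obtain ⟨Cf, hrun, hterm⟩ := hms
  obtain ⟨hsub, hclosed⟩ := hrun.pebbled_subset_computedNodes (S := ∅)
    (by rw [pebbled, allRed_init]; rfl) (by simp [PredClosed])
  have hall : ((computedNodes ms : Finset V) : Set V) = Set.univ := by
    refine hE.eq_univ_of_predClosed (by simpa using hclosed) fun v hv => ?_
    have : v ∈ pebbled Cf := by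
      rcases hterm v hv with h | ⟨j, h⟩
      · exact Finset.mem_union_right _ h
      · exact Finset.mem_union_left _ (mem_allRed h)
    simpa using hsub this
  calc Fintype.card V = (computedNodes ms).card := by
        rw [← Finset.card_univ, ← Finset.coe_eq_univ.1 hall]
    _ ≤ k * computeCount ms := hrun.card_computedNodes_le

end MPP

theorem stmt4_general {V : Type} [Fintype V] [DecidableEq V] (E : V → V → Prop)
    (hdag : IsDag E) (k r g L : ℕ)
    (hSPP : ∀ ss : List (SPP.Move V), SPP.IsPebbling E (k * r) ss → L ≤ SPP.ioCount ss)
    (ms : List (MPP.Move V k)) (hms : MPP.IsPebbling E r ms) :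
    (g : ℝ) * L / k + (Fintype.card V : ℝ) / k ≤ (MPP.cost g ms : ℝ) := by
  obtain ⟨ss, hss, hio⟩ := hms.exists_spp_pebbling
  have hL : L ≤ k * MPP.ioCount ms := (hSPP ss hss).trans hio
  have hn : Fintype.card V ≤ k * MPP.computeCount ms := hms.card_le_computeCount hdag
  have hcost : g * L + Fintype.card V ≤ MPP.cost g ms * k :=
    calc g * L + Fintype.card V ≤ g * (k * MPP.ioCount ms) + k * MPP.computeCount ms :=
          Nat.add_le_add (Nat.mul_le_mul_left g hL) hn
      _ = MPP.cost g ms * k := by rw [MPP.cost_eq]; ring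
  rw [← add_div]
  exact div_le_of_le_mul₀ (by positivity) (by positivity) (by exact_mod_cast hcost)

/-- If every SPP pebbling strategy of `G` (with `n` nodes) with
memory bound `k·r` uses at least `L` I/O moves, then every MPP pebbling strategy
of `G` with `k` processors, memory bound `r` per processor and I/O cost `g` has
total cost at least `g·L/k + n/k`. -/
theorem stmt4 {V : Type} [Fintype V] [DecidableEq V] (E : V → V → Prop)
    (hdag : IsDag E) (k r g L : ℕ) (hk : 0 < k) (hr0 : 0 < r) (hg : 0 < g) (hL : 0 < L)
    (hSPP : ∀ ss : List (SPP.Move V), SPP.IsPebbling E (k * r) ss → L ≤ SPP.ioCount ss)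
    (ms : List (MPP.Move V k)) (hms : MPP.IsPebbling E r ms) :
    (g : ℝ) * L / k + (Fintype.card V : ℝ) / k ≤ (MPP.cost g ms : ℝ) :=
  stmt4_general E hdag k r g L hSPP ms hms
end

section
/- For every finite DAG G and all k, r, g ∈ ℤ⁺ with r ≥ Δ_in+1: the optimal MPP cost with 1 processor and memory bound k·r is at most k times the optimal MPP cost with k processors and memory bound r per processor; that is, OPT^(1)(memory k·r) ≤ k · OPT^(k)(memory r), equivalently OPT^(k)/OPT^(1) ≥ 1/k in the fair comparison. -/
open scoped Classical

/-!
One processor with memory `k * r` simulates `k` processors with memory `r` each: it keeps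
red pebbles on the union of their red sets, which has at most `k * r` elements, and replays a
parallel move placing `m ≤ k` pebbles as `m` single moves of the same kind, so each move costs
at most `k` times as much. A `k`-processor pebbling exists when `r ≥ Δ_in + 1` (in topological
order, load the in-neighbours of a node, compute it, save it, clear the memory), so `OPT⁽ᵏ⁾` is
the cost of an actual strategy rather than `sInf ∅ = 0`, and simulating an optimal one gives
the bound.
-/

namespace MPP

open Finset

variable {V : Type*} {k : ℕ} {E : V → V → Prop} {r g : ℕ}

theorem cost_append (l l' : List (Move V k)) : cost g (l ++ l') = cost g l + cost g l' := by
  simp [cost]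

theorem cost_map_of_moveCost_eq {α : Type*} (l : List α) (f : α → Move V k) {c : ℕ}
    (h : ∀ a, moveCost g (f a) = c) : cost g (l.map f) = l.length * c := by
  simp [cost, Function.comp_def, h]

def Move.saveOne (j : Fin k) (u : V) : Move V k := .save 1 (fun _ => j) (fun _ => u)

def Move.loadOne (j : Fin k) (u : V) : Move V k := .load 1 (fun _ => j) (fun _ => u)

def Move.computeOne (j : Fin k) (u : V) : Move V k := .compute 1 (fun _ => j) (fun _ => u)

section SingleMoves

variable (C : Conf V k) (j : Fin k) (u : V)

@[simp] theorem legal_saveOne : Legal E C (.saveOne j u) ↔ u ∈ C.red j := by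
  simp [Move.saveOne, Legal, Nat.one_le_of_lt j.pos, Function.injective_of_subsingleton]

@[simp] theorem legal_loadOne : Legal E C (.loadOne j u) ↔ u ∈ C.blue := by
  simp [Move.loadOne, Legal, Nat.one_le_of_lt j.pos, Function.injective_of_subsingleton]

@[simp] theorem legal_computeOne : Legal E C (.computeOne j u) ↔ ∀ w, E w u → w ∈ C.red j := by
  simp [Move.computeOne, Legal, Nat.one_le_of_lt j.pos, Function.injective_of_subsingleton]

variable [DecidableEq V]

theorem addRed_const : addRed C (fun _ : Fin 1 => j) (fun _ => u) =
    Function.update C.red j (insert u (C.red j)) := by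
  funext i; ext x
  rcases eq_or_ne i j with rfl | hi
  · simp [addRed, eq_comm]
  · simp [addRed, hi, hi.symm]

@[simp] theorem apply_saveOne : apply (.saveOne j u) C = ⟨C.red, insert u C.blue⟩ := by
  simp [Move.saveOne, apply]

@[simp] theorem apply_loadOne :
    apply (.loadOne j u) C = ⟨Function.update C.red j (insert u (C.red j)), C.blue⟩ := by
  simp [Move.loadOne, apply, addRed_const]

@[simp] theorem apply_computeOne :
    apply (.computeOne j u) C = ⟨Function.update C.red j (insert u (C.red j)), C.blue⟩ := by
  simp [Move.computeOne, apply, addRed_const]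

end SingleMoves

theorem valid_update_empty {j : Fin k} {R B : Finset V} (h : #R ≤ r) :
    Valid r (⟨Function.update (fun _ => ∅) j R, B⟩ : Conf V k) := by
  intro i
  rcases eq_or_ne i j with rfl | hi <;> simp [*]

theorem card_filter_le_maxInDeg [Fintype V] (v : V) : #{u | E u v} ≤ maxInDeg E :=
  le_sup (f := fun w => #{u | E u w}) (mem_univ v)

variable [DecidableEq V]

theorem Run.append {C C' C'' : Conf V k} {l l' : List (Move V k)}
    (h : Run E r C l C') (h' : Run E r C' l' C'') : Run E r C (l ++ l') C'' := by
  induction h with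
  | nil => exact h'
  | cons hleg hval _ ih => exact .cons hleg hval (ih h')

/-- `F t` is the configuration reached once the moves for the elements of `t` are done. -/
theorem Run.map_of_step {α : Type*} [DecidableEq α] (F : Finset α → Conf V k)
    (mv : α → Move V k) (l : List α)
    (hstep : ∀ t ⊆ l.toFinset, ∀ a ∈ l, Legal E (F t) (mv a) ∧
      apply (mv a) (F t) = F (insert a t) ∧ Valid r (F (insert a t))) :
    Run E r (F ∅) (l.map mv) (F l.toFinset) := by
  induction l generalizing F with
  | nil => exact .nil _
  | cons a l ih =>
    obtain ⟨hleg, happ, hval⟩ := hstep ∅ (Finset.empty_subset _) a List.mem_cons_self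
    refine .cons hleg (happ ▸ hval) ?_
    rw [happ, List.toFinset_cons]
    refine ih (fun t => F (insert a t)) fun t ht b hb => ?_
    rw [Finset.insert_comm a b t]
    exact hstep (insert a t) (by simpa using Finset.insert_subset_insert a ht) b
      (List.mem_cons_of_mem a hb)

section Existence

variable [Fintype V]

theorem exists_run_insert_blue (hr : maxInDeg E + 1 ≤ r) (j : Fin k) {S : Finset V} {v : V}
    (hS : ∀ u, E u v → u ∈ S) :
    ∃ ms : List (Move V k), Run E r ⟨fun _ => ∅, S⟩ ms ⟨fun _ => ∅, insert v S⟩ := by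
  have hP : #(insert v ({u | E u v} : Finset V)) ≤ r :=
    (card_insert_le _ _).trans (by have := card_filter_le_maxInDeg (E := E) v; omega)
  set P : Finset V := {u | E u v}
  let solo (R B : Finset V) : Conf V k := ⟨Function.update (fun _ => ∅) j R, B⟩
  have solo_empty (B : Finset V) : solo ∅ B = ⟨fun _ => ∅, B⟩ := by simp [solo]
  have hload : Run E r (solo ∅ S) (P.toList.map (.loadOne j)) (solo P S) := by
    simpa using Run.map_of_step (fun t => solo t S) (.loadOne j) P.toList fun t ht u hu => by
      simp only [mem_toList, P, mem_filter] at hu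
      refine ⟨by simpa using hS u hu.2, by simp [solo], valid_update_empty ?_⟩
      exact (card_le_card (insert_subset (by simpa [P] using hu) (by simpa using ht))).trans
        ((card_le_card (subset_insert v P)).trans hP)
  have hremove : Run E r (solo (insert v P) (insert v S))
      ((insert v P).toList.map (.removeRed j)) (solo ∅ (insert v S)) := by
    simpa using Run.map_of_step (fun t => solo (insert v P \ t) (insert v S)) (.removeRed j)
      (insert v P).toList fun t _ u _ => ⟨trivial, by simp [solo, apply, sdiff_insert,
        sdiff_singleton_eq_erase], valid_update_empty ((card_le_card sdiff_subset).trans hP)⟩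
  have hcompute : apply (.computeOne j v) (solo P S) = solo (insert v P) S := by simp [solo]
  have hsave : apply (.saveOne j v) (solo (insert v P) S) = solo (insert v P) (insert v S) := by
    simp [solo]
  refine ⟨P.toList.map (.loadOne j) ++
    .computeOne j v :: .saveOne j v :: (insert v P).toList.map (.removeRed j), ?_⟩
  rw [← solo_empty, ← solo_empty]
  refine hload.append (.cons (by simp [solo, P]) (hcompute ▸ valid_update_empty hP) ?_)
  rw [hcompute]
  exact .cons (by simp [solo]) (hsave ▸ valid_update_empty hP) (hsave ▸ hremove)

theorem exists_isPebbling (hdag : IsDag E) (hk : 0 < k) (hr : maxInDeg E + 1 ≤ r) :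
    ∃ ms : List (Move V k), IsPebbling E r ms := by
  have hwf : WellFounded (Relation.TransGen E) := by
    have : IsTrans V (Relation.TransGen E) := ⟨fun _ _ _ => .trans⟩
    have : Std.Irrefl (Relation.TransGen E) := ⟨hdag⟩
    exact Finite.wellFounded_of_trans_of_irrefl _
  suffices h : ∀ S : Finset V, ∃ ms, Run E r ⟨fun _ => ∅, S⟩ ms ⟨fun _ => ∅, univ⟩ by
    obtain ⟨ms, h⟩ := h ∅
    exact ⟨ms, _, h, fun v _ => .inl (mem_univ v)⟩
  intro S
  induction S using WellFoundedGT.induction with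
  | _ S ih =>
    by_cases hS : S = univ
    · exact hS ▸ ⟨[], .nil _⟩
    obtain ⟨v, hvS, hmin⟩ := hwf.has_min {v | v ∉ S} <| by
      simpa [eq_univ_iff_forall, Set.Nonempty] using hS
    obtain ⟨ms, hms⟩ := exists_run_insert_blue hr ⟨0, hk⟩ fun u hu =>
      by_contra fun huS => hmin u huS (.single hu)
    obtain ⟨ms', hms'⟩ := ih (insert v S) (ssubset_insert hvS)
    exact ⟨ms ++ ms', hms.append hms'⟩

end Existence

section Merge

def merge (C : Conf V k) : Conf V 1 := ⟨fun _ => univ.biUnion C.red, C.blue⟩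

theorem valid_merge {C : Conf V k} (hC : Valid r C) : Valid (k * r) (merge C) := fun _ =>
  calc #(univ.biUnion C.red) ≤ ∑ j, #(C.red j) := card_biUnion_le
    _ ≤ ∑ _j : Fin k, r := sum_le_sum fun j _ => hC j
    _ = k * r := by simp

theorem red_subset_merge (C : Conf V k) (j : Fin k) (i : Fin 1) : C.red j ⊆ (merge C).red i :=
  subset_biUnion_of_mem C.red (mem_univ j)

theorem biUnion_addRed (C : Conf V k) {m : ℕ} (f : Fin m → Fin k) (v : Fin m → V) :
    univ.biUnion (addRed C f v) = univ.biUnion C.red ∪ univ.image v := by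
  ext x
  simp only [addRed, mem_biUnion, mem_union, mem_image, mem_filter, mem_univ, true_and]
  constructor
  · rintro ⟨j, hj | ⟨i, -, rfl⟩⟩
    exacts [.inl ⟨j, hj⟩, .inr ⟨i, rfl⟩]
  · rintro (⟨j, hj⟩ | ⟨i, rfl⟩)
    exacts [⟨j, .inl hj⟩, ⟨f i, .inr ⟨i, rfl, rfl⟩⟩]

theorem run_merge_addRed {C : Conf V k} {m : ℕ} (f : Fin m → Fin k) (v : Fin m → V)
    (mv : V → Move V 1)
    (happ : ∀ D u, apply (mv u) D = ⟨Function.update D.red 0 (insert u (D.red 0)), D.blue⟩)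
    (hleg : ∀ i R, univ.biUnion C.red ⊆ R → Legal E ⟨fun _ => R, C.blue⟩ (mv (v i)))
    (hval : Valid r (⟨addRed C f v, C.blue⟩ : Conf V k)) :
    Run E (k * r) (merge C) ((List.ofFn v).map mv) (merge ⟨addRed C f v, C.blue⟩) := by
  have := Run.map_of_step (fun t => ⟨fun _ => univ.biUnion C.red ∪ t, C.blue⟩) mv (List.ofFn v)
    fun t ht u hu => by
      obtain ⟨i, rfl⟩ := List.mem_ofFn.1 hu
      have happ' : apply (mv (v i)) ⟨fun _ => univ.biUnion C.red ∪ t, C.blue⟩ =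
          ⟨fun _ => univ.biUnion C.red ∪ insert (v i) t, C.blue⟩ := by
        rw [happ, union_insert]
        exact congrArg (Conf.mk · C.blue) (Function.update_eq_const_of_subsingleton _ _ _)
      refine ⟨hleg i _ subset_union_left, happ', fun _ => ?_⟩
      calc #(univ.biUnion C.red ∪ insert (v i) t) ≤ #(univ.biUnion (addRed C f v)) := by
            rw [biUnion_addRed, Fin.univ_image_def]
            exact card_le_card (union_subset_union_right
              (insert_subset (by simp) (by simpa using ht)))
        _ ≤ k * r := valid_merge hval 0
  simpa [merge, biUnion_addRed, Fin.univ_image_def] using this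

theorem biUnion_update_sdiff (C : Conf V k) (j : Fin k) (x : V) :
    univ.biUnion (Function.update C.red j (C.red j \ {x})) = univ.biUnion C.red ∨
      univ.biUnion (Function.update C.red j (C.red j \ {x})) = (univ.biUnion C.red).erase x := by
  set R' := univ.biUnion (Function.update C.red j (C.red j \ {x}))
  have hsub : R' ⊆ univ.biUnion C.red := biUnion_mono fun i _ => by
    rcases eq_or_ne i j with rfl | hi <;> simp [*]
  have hsup : (univ.biUnion C.red).erase x ⊆ R' := fun y hy => by
    obtain ⟨hyx, hy⟩ := mem_erase.1 hy
    obtain ⟨i, -, hi⟩ := mem_biUnion.1 hy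
    refine mem_biUnion.2 ⟨i, mem_univ i, ?_⟩
    rcases eq_or_ne i j with rfl | hij <;> simp [*]
  by_cases hx : x ∈ R'
  · refine .inl (hsub.antisymm fun y hy => ?_)
    by_cases hyx : y = x
    exacts [hyx ▸ hx, hsup (mem_erase.2 ⟨hyx, hy⟩)]
  · refine .inr (Subset.antisymm (fun y hy => mem_erase.2 ⟨?_, hsub hy⟩) hsup)
    rintro rfl
    exact hx hy

theorem exists_run_merge_apply {C : Conf V k} {mv : Move V k} (hC : Valid r C)
    (hleg : Legal E C mv) (hval : Valid r (apply mv C)) :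
    ∃ ms : List (Move V 1), Run E (k * r) (merge C) ms (merge (apply mv C)) ∧
      cost g ms ≤ k * moveCost g mv := by
  cases mv with
  | save m f v =>
    obtain ⟨hm, -, hv⟩ := hleg
    refine ⟨(List.ofFn v).map (.saveOne 0), ?_, ?_⟩
    · have := Run.map_of_step (E := E) (r := k * r) (fun t => ⟨(merge C).red, C.blue ∪ t⟩)
        (.saveOne 0) (List.ofFn v) fun t _ u hu => by
          obtain ⟨i, rfl⟩ := List.mem_ofFn.1 hu
          exact ⟨by simpa using red_subset_merge C (f i) 0 (hv i), by simp, valid_merge hC⟩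
      simpa [merge, apply, Fin.univ_image_def] using this
    · rw [cost_map_of_moveCost_eq _ (Move.saveOne 0) fun _ => rfl, List.length_ofFn]
      exact Nat.mul_le_mul_right g hm
  | load m f v =>
    obtain ⟨hm, -, hv⟩ := hleg
    refine ⟨(List.ofFn v).map (.loadOne 0),
      run_merge_addRed f v _ (fun D u => apply_loadOne D 0 u) (fun i _ _ => by simpa using hv i)
        hval, ?_⟩
    rw [cost_map_of_moveCost_eq _ (Move.loadOne 0) fun _ => rfl, List.length_ofFn]
    exact Nat.mul_le_mul_right g hm
  | compute m f v =>
    obtain ⟨hm, -, hv⟩ := hleg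
    refine ⟨(List.ofFn v).map (.computeOne 0),
      run_merge_addRed f v _ (fun D u => apply_computeOne D 0 u)
        (fun i _ hR => by simpa using fun w hw => hR (red_subset_merge C (f i) 0 (hv i w hw)))
        hval, ?_⟩
    rw [cost_map_of_moveCost_eq _ (Move.computeOne 0) fun _ => rfl, List.length_ofFn]
    simpa [moveCost] using hm
  | removeRed j x =>
    rcases biUnion_update_sdiff C j x with h | h
    · have hmerge : merge (apply (.removeRed j x) C) = merge C := by simp only [merge, apply, h]
      exact ⟨[], hmerge ▸ .nil _, by simp [cost]⟩
    · have hmerge : apply (.removeRed 0 x) (merge C) = merge (apply (.removeRed j x) C) := by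
        simp only [merge, apply, h]
        rw [sdiff_singleton_eq_erase]
        exact congrArg (Conf.mk · C.blue) (Function.update_eq_const_of_subsingleton _ _ _)
      exact ⟨[.removeRed 0 x], .cons trivial (hmerge ▸ valid_merge hval) (hmerge ▸ .nil _),
        by simp [cost, moveCost]⟩
  | removeBlue x =>
    exact ⟨[.removeBlue x], .cons trivial (valid_merge hC) (.nil _), by simp [cost, moveCost]⟩

theorem Run.exists_merge {C C' : Conf V k} {ms : List (Move V k)} (hC : Valid r C)
    (h : Run E r C ms C') :
    ∃ ms₁ : List (Move V 1), Run E (k * r) (merge C) ms₁ (merge C') ∧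
      cost g ms₁ ≤ k * cost g ms := by
  induction h with
  | nil C => exact ⟨[], .nil _, by simp [cost]⟩
  | @cons C C'' mv ms hleg hval _ ih =>
    obtain ⟨ms₁, h₁, hc₁⟩ := exists_run_merge_apply (g := g) hC hleg hval
    obtain ⟨ms₂, h₂, hc₂⟩ := ih hval
    refine ⟨ms₁ ++ ms₂, h₁.append h₂, ?_⟩
    calc cost g (ms₁ ++ ms₂) = cost g ms₁ + cost g ms₂ := cost_append ms₁ ms₂
      _ ≤ k * moveCost g mv + k * cost g ms := add_le_add hc₁ hc₂
      _ = k * cost g (mv :: ms) := by simp [cost, mul_add]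

theorem IsPebbling.exists_merge {ms : List (Move V k)} (h : IsPebbling E r ms) :
    ∃ ms₁ : List (Move V 1), IsPebbling E (k * r) ms₁ ∧ cost g ms₁ ≤ k * cost g ms := by
  obtain ⟨C, hrun, hterm⟩ := h
  obtain ⟨ms₁, hrun₁, hcost⟩ := hrun.exists_merge (g := g) fun _ => by simp [init]
  have hinit : merge (init V k) = init V 1 := by
    simp [merge, init, funext_iff, eq_empty_iff_forall_notMem]
  refine ⟨ms₁, ⟨merge C, hinit ▸ hrun₁, fun v hv => ?_⟩, hcost⟩
  rcases hterm v hv with hb | ⟨j, hj⟩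
  exacts [.inl hb, .inr ⟨0, red_subset_merge C j 0 hj⟩]

end Merge

theorem optCost_le {ms : List (Move V k)} (h : IsPebbling E r ms) : optCost E k r g ≤ cost g ms :=
  Nat.sInf_le ⟨ms, h, rfl⟩

theorem exists_cost_eq_optCost (h : ∃ ms : List (Move V k), IsPebbling E r ms) :
    ∃ ms : List (Move V k), IsPebbling E r ms ∧ cost g ms = optCost E k r g := by
  obtain ⟨ms, h⟩ := h
  exact Nat.sInf_mem (s := {c | ∃ ms : List (Move V k), IsPebbling E r ms ∧ cost g ms = c})
    ⟨_, ms, h, rfl⟩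

end MPP

theorem stmt7_general {V : Type} [Fintype V] [DecidableEq V] (E : V → V → Prop)
    (hdag : IsDag E) (k r g : ℕ) (hk : 0 < k)
    (hr : MPP.maxInDeg E + 1 ≤ r) :
    MPP.optCost E 1 (k * r) g ≤ k * MPP.optCost E k r g := by
  obtain ⟨ms, hms, hcost⟩ :=
    MPP.exists_cost_eq_optCost (g := g) (MPP.exists_isPebbling hdag hk hr)
  obtain ⟨ms₁, hms₁, hcost₁⟩ := hms.exists_merge (g := g)
  calc MPP.optCost E 1 (k * r) g ≤ MPP.cost g ms₁ := MPP.optCost_le hms₁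
    _ ≤ k * MPP.cost g ms := hcost₁
    _ = k * MPP.optCost E k r g := by rw [hcost]

/-- For every finite DAG `G` and all `k, r, g ∈ ℤ⁺` with
`r ≥ Δ_in + 1`: the optimal MPP cost with 1 processor and memory bound `k·r` is
at most `k` times the optimal MPP cost with `k` processors and memory bound `r`
per processor (fair comparison: `OPT⁽ᵏ⁾/OPT⁽¹⁾ ≥ 1/k`). -/
theorem stmt7 {V : Type} [Fintype V] [DecidableEq V] (E : V → V → Prop)
    (hdag : IsDag E) (k r g : ℕ) (hk : 0 < k) (hr0 : 0 < r) (hg : 0 < g)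
    (hr : MPP.maxInDeg E + 1 ≤ r) :
    MPP.optCost E 1 (k * r) g ≤ k * MPP.optCost E k r g :=
  stmt7_general E hdag k r g hk hr
end
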